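/- Let G be a finite simple graph and f a uniformly random labeling with fixed label counts. For pairwise distinct labels i, j, k, Cov(R_{ii}, R_{jk}) = (|G|^2 - sum_t |G_t|^2 + |G|) * 2 n_i n_j n_k (n_i - 1)/(N(N-1)(N-2)(N-3)) - E(R_{ii}) E(R_{jk}). -/

import Mathlib

/-!
Permuting the vertices preserves the uniform distribution on labelings, so the probability that an
injective tuple of vertices carries prescribed labels does not depend on the tuple; double counting
pairs (tuple, labeling) gives it as `∏_c (n_c)_(m_c) / (N)_r` for a tuple of length `r` with `m_c`
prescribed labels equal to `c`, where `(x)_r` is the falling factorial.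
Writing `R_ii` and `R_jk` as sums of edge indicators, `E(R_ii R_jk)` becomes a sum over ordered pairs
of edges: pairs sharing a vertex contribute nothing because `i ∉ {j, k}`, and each vertex-disjoint
pair contributes `2 n_i (n_i - 1) n_j n_k / (N)_4`. Since `∑_v deg(v)^2` counts ordered pairs of
edges weighted by their number of common vertices, there are `|G|^2 - ∑_v deg(v)^2 + |G|`
vertex-disjoint pairs.
-/

open Finset

variable {V : Type*} [Fintype V] [DecidableEq V] {K : ℕ}

/-- The set of labelings `f : V → Fin K` with exactly `n k` vertices labeled `k`. -/
def labelings (n : Fin K → ℕ) : Finset (V → Fin K) :=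
  Finset.univ.filter fun f => ∀ k, (Finset.univ.filter fun x => f x = k).card = n k

/-- Probability of an event under the uniform distribution on `labelings n`. -/
noncomputable def prob (n : Fin K → ℕ) (P : (V → Fin K) → Prop) [DecidablePred P] : ℝ :=
  (((labelings n).filter P).card : ℝ) / (((labelings n : Finset (V → Fin K))).card : ℝ)

/-- Expectation of a real random variable under the uniform distribution on `labelings n`. -/
noncomputable def expect (n : Fin K → ℕ) (X : (V → Fin K) → ℝ) : ℝ :=
  (∑ f ∈ labelings n, X f) / (((labelings n : Finset (V → Fin K))).card : ℝ)

/-- Covariance under the uniform distribution on `labelings n`. -/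
noncomputable def covar (n : Fin K → ℕ) (X Y : (V → Fin K) → ℝ) : ℝ :=
  expect n (fun f => (X f - expect n X) * (Y f - expect n Y))

/-- `Rcount G f i j` is the number of edges of `G` whose endpoint labels (under `f`)
are exactly the unordered pair `{i, j}`. -/
def Rcount (G : SimpleGraph V) [DecidableRel G.Adj] (f : V → Fin K) (i j : Fin K) : ℕ :=
  (G.edgeFinset.filter fun e => Sym2.map f e = s(i, j)).card

section UniformLabeling

variable {n : Fin K → ℕ}

lemma expect_sum {α : Type*} (s : Finset α) (X : α → (V → Fin K) → ℝ) :
    expect n (fun f => ∑ a ∈ s, X a f) = ∑ a ∈ s, expect n (X a) := by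
  simp only [_root_.expect, sum_comm (s := labelings n), sum_div]

lemma expect_boole (P : (V → Fin K) → Prop) [DecidablePred P] :
    expect n (fun f => if P f then 1 else 0) = prob n P := by
  rw [_root_.expect, sum_boole, prob]

lemma covar_eq_expect_mul_sub (X Y : (V → Fin K) → ℝ) :
    covar n X Y = expect n (fun f => X f * Y f) - expect n X * expect n Y := by
  simp only [covar, _root_.expect]
  rcases eq_or_ne (#(labelings n : Finset (V → Fin K)) : ℝ) 0 with hL | hL
  · simp [hL]
  simp only [sub_mul, mul_sub, sum_sub_distrib, ← sum_mul, ← mul_sum, sum_const, nsmul_eq_mul]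
  field_simp
  ring

lemma prob_congr {P Q : (V → Fin K) → Prop} [DecidablePred P] [DecidablePred Q]
    (h : ∀ f, P f ↔ Q f) : prob n P = prob n Q := by
  rw [prob, prob, filter_congr fun f _ => h f]

lemma prob_or {P Q : (V → Fin K) → Prop} [DecidablePred P] [DecidablePred Q]
    (h : ∀ f, P f → ¬Q f) : prob n (fun f => P f ∨ Q f) = prob n P + prob n Q := by
  rw [prob, prob, prob, filter_or, card_union_of_disjoint (disjoint_filter.2 fun f _ => h f),
    Nat.cast_add, add_div]

lemma prob_eq_zero {P : (V → Fin K) → Prop} [DecidablePred P] (h : ∀ f, ¬P f) :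
    prob n P = 0 := by
  rw [prob, filter_false_of_mem fun f _ => h f, card_empty, Nat.cast_zero, zero_div]

end UniformLabeling

section Counting

variable (n : Fin K → ℕ) {ι : Type*} [Fintype ι]

lemma comp_perm_mem_labelings {f : V → Fin K} (hf : f ∈ labelings n) (σ : Equiv.Perm V) :
    f ∘ σ ∈ labelings n := by
  simp only [labelings, mem_filter, mem_univ, true_and] at hf ⊢
  intro c
  rw [← hf c]
  exact card_equiv σ (by simp)

lemma card_filter_apply_embedding_eq (g : ι → Fin K) (t t' : ι ↪ V) :
    #{f ∈ labelings n | ∀ x, f (t x) = g x} = #{f ∈ labelings n | ∀ x, f (t' x) = g x} := by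
  obtain ⟨σ, hσ⟩ := Equiv.Perm.exists_extending_pair t t' t.injective t'.injective
  refine card_nbij' (· ∘ σ.symm) (· ∘ σ) ?_ ?_ ?_ ?_
  · intro f hf
    simp only [coe_filter, Set.mem_ofPred_eq] at hf ⊢
    refine ⟨comp_perm_mem_labelings n hf.1 σ.symm, fun x => ?_⟩
    simp [← hσ x, hf.2 x]
  · intro f hf
    simp only [coe_filter, Set.mem_ofPred_eq] at hf ⊢
    refine ⟨comp_perm_mem_labelings n hf.1 σ, fun x => ?_⟩
    simp [hσ x, hf.2 x]
  · intro f _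
    simp [Function.comp_assoc]
  · intro f _
    simp [Function.comp_assoc]

def fiberwiseEmbeddingEquiv (f : V → Fin K) (g : ι → Fin K) :
    {t : ι ↪ V // ∀ x, f (t x) = g x} ≃ ∀ c, {x // g x = c} ↪ {v // f v = c} where
  toFun t c := ⟨fun x => ⟨t.1 x, (t.2 x).trans x.2⟩,
    fun _ _ h => Subtype.ext (t.1.injective (congrArg Subtype.val h))⟩
  invFun e := ⟨⟨fun x => e (g x) ⟨x, rfl⟩, fun x y hxy => by
      suffices ∀ c c' (hx : g x = c) (hy : g y = c'),
          (e c ⟨x, hx⟩ : V) = e c' ⟨y, hy⟩ → x = y from this _ _ rfl rfl hxy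
      rintro c c' hx hy h
      obtain rfl : c = c' := (e c ⟨x, hx⟩).2.symm.trans ((congrArg f h).trans (e c' ⟨y, hy⟩).2)
      exact congrArg Subtype.val ((e c).injective (Subtype.ext h))⟩,
    fun x => (e (g x) ⟨x, rfl⟩).2⟩
  left_inv _ := rfl
  right_inv e := by
    funext c
    ext ⟨x, rfl⟩
    rfl

lemma card_filter_apply_embedding_mul_descFactorial (g : ι → Fin K) (t : ι ↪ V) :
    #{f ∈ labelings n | ∀ x, f (t x) = g x} * (Fintype.card V).descFactorial (Fintype.card ι)
      = #(labelings n : Finset (V → Fin K)) * ∏ c, (n c).descFactorial #{x | g x = c} := by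
  classical
  have hfiber : ∀ f ∈ labelings n, #{t' : ι ↪ V | ∀ x, f (t' x) = g x}
      = ∏ c, (n c).descFactorial #{x | g x = c} := by
    intro f hf
    rw [← Fintype.card_subtype, Fintype.card_congr (fiberwiseEmbeddingEquiv f g),
      Fintype.card_pi]
    refine prod_congr rfl fun c _ => ?_
    rw [Fintype.card_embedding_eq, Fintype.card_subtype, Fintype.card_subtype,
      (mem_filter.1 hf).2 c]
  calc _ = ∑ t' : ι ↪ V, #{f ∈ labelings n | ∀ x, f (t' x) = g x} := by
        rw [sum_congr rfl fun t' _ => card_filter_apply_embedding_eq n g t' t, sum_const,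
          card_univ, Fintype.card_embedding_eq, smul_eq_mul, mul_comm]
    _ = ∑ f ∈ labelings n, #{t' : ι ↪ V | ∀ x, f (t' x) = g x} := by
        simp only [card_filter]
        exact sum_comm
    _ = _ := by rw [sum_congr rfl hfiber, sum_const, smul_eq_mul]

lemma labelings_nonempty (hn : ∑ c, n c = Fintype.card V) :
    (labelings n : Finset (V → Fin K)).Nonempty := by
  obtain ⟨E⟩ : Nonempty (V ≃ Σ c, Fin (n c)) :=
    Fintype.card_eq.1 (by simp [Fintype.card_sigma, hn])
  refine ⟨fun v => (E v).1, mem_filter.2 ⟨mem_univ _, fun c => ?_⟩⟩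
  rw [← Fintype.card_subtype, Fintype.card_congr ((E.subtypeEquiv fun _ => Iff.rfl).trans
    (Equiv.sigmaSubtype c)), Fintype.card_fin]

lemma prob_apply_embedding_eq (hn : ∑ c, n c = Fintype.card V) (g : ι → Fin K) (t : ι ↪ V) :
    prob n (fun f => ∀ x, f (t x) = g x)
      = ((∏ c, (n c).descFactorial #{x | g x = c} : ℕ) : ℝ)
        / (Fintype.card V).descFactorial (Fintype.card ι) := by
  have hL : (#(labelings n : Finset (V → Fin K)) : ℝ) ≠ 0 := by
    exact_mod_cast (labelings_nonempty n hn).card_pos.ne'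
  have hD : ((Fintype.card V).descFactorial (Fintype.card ι) : ℝ) ≠ 0 := by
    exact_mod_cast Nat.descFactorial_eq_zero_iff_lt.not.2 (Fintype.card_le_of_embedding t).not_gt
  rw [prob, div_eq_div_iff hL hD]
  exact_mod_cast (card_filter_apply_embedding_mul_descFactorial n g t).trans (mul_comm _ _)

end Counting

lemma Nat.cast_descFactorial_four {S : Type*} [CommRing S] (a : ℕ) :
    (a.descFactorial 4 : S) = a * (a - 1) * (a - 2) * (a - 3) := by
  rw [← descPochhammer_eval_eq_descFactorial]
  simp [descPochhammer_succ_right]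

section PointEvents

variable {n : Fin K → ℕ} (hn : ∑ c, n c = Fintype.card V)
include hn

lemma prob_apply_eq_and_apply_eq {a b : V} (hab : a ≠ b) (p q : Fin K) :
    prob n (fun f => f a = p ∧ f b = q)
      = ((∏ c, (n c).descFactorial #{x | ![p, q] x = c} : ℕ) : ℝ)
        / (Fintype.card V * (Fintype.card V - 1)) := by
  let t : Fin 2 ↪ V := ⟨![a, b], by simp [Function.Injective, Fin.forall_fin_two, hab, hab.symm]⟩
  have := prob_apply_embedding_eq n hn ![p, q] t
  rw [Fintype.card_fin, Nat.cast_descFactorial_two] at this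
  -- `convert`, not `prob_congr`: the two events carry different `Decidable` instances.
  convert this using 3 with f
  rw [Fin.forall_fin_two]
  rfl

lemma prob_apply_eq_and_apply_eq_self {a b : V} (hab : a ≠ b) (i : Fin K) :
    prob n (fun f => f a = i ∧ f b = i)
      = n i * (n i - 1) / (Fintype.card V * (Fintype.card V - 1)) := by
  have hprod : ∏ c, (n c).descFactorial #{x | ![i, i] x = c} = (n i).descFactorial 2 := by
    simp only [card_filter, Fin.sum_univ_two]
    rw [prod_eq_single i (fun c _ hc => by simp [Ne.symm hc]) (by simp)]
    simp
  rw [prob_apply_eq_and_apply_eq hn hab, hprod, Nat.cast_descFactorial_two]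

lemma prob_apply_eq_and_apply_eq_of_ne {a b : V} (hab : a ≠ b) {p q : Fin K} (hpq : p ≠ q) :
    prob n (fun f => f a = p ∧ f b = q)
      = n p * n q / (Fintype.card V * (Fintype.card V - 1)) := by
  have hprod : ∏ c, (n c).descFactorial #{x | ![p, q] x = c} = n p * n q := by
    simp only [card_filter, Fin.sum_univ_two]
    rw [← prod_subset (subset_univ {p, q}) fun c _ hc => ?_, prod_pair hpq]
    · simp [hpq, hpq.symm]
    · simp only [mem_insert, mem_singleton, not_or] at hc
      simp [Ne.symm hc.1, Ne.symm hc.2]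
  rw [prob_apply_eq_and_apply_eq hn hab, hprod, Nat.cast_mul]

lemma prob_apply_eq_and_apply_eq_and_apply_eq_and_apply_eq {a b c d : V}
    (habcd : [a, b, c, d].Nodup) {i j k : Fin K} (hij : i ≠ j) (hik : i ≠ k) (hjk : j ≠ k) :
    prob n (fun f => f a = i ∧ f b = i ∧ f c = j ∧ f d = k)
      = n i * (n i - 1) * (n j * n k) / (Fintype.card V * (Fintype.card V - 1)
          * (Fintype.card V - 2) * (Fintype.card V - 3)) := by
  have hprod : ∏ c, (n c).descFactorial #{x | ![i, i, j, k] x = c}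
      = (n i).descFactorial 2 * (n j * n k) := by
    simp only [card_filter, Fin.sum_univ_four]
    rw [← prod_subset (subset_univ {i, j, k}) fun c _ hc => ?_,
      prod_insert (by simp [hij, hik]), prod_pair hjk]
    · simp [hij, hik, hjk, hij.symm, hik.symm, hjk.symm]
    · simp only [mem_insert, mem_singleton, not_or] at hc
      simp [Ne.symm hc.1, Ne.symm hc.2.1, Ne.symm hc.2.2]
  let t : Fin 4 ↪ V := ⟨![a, b, c, d], List.nodup_ofFn.mp habcd⟩
  have := prob_apply_embedding_eq n hn ![i, i, j, k] t
  rw [Fintype.card_fin, Nat.cast_descFactorial_four, hprod, Nat.cast_mul,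
    Nat.cast_descFactorial_two, Nat.cast_mul] at this
  convert this using 3 with f
  simp only [Fin.forall_fin_succ, IsEmpty.forall_iff, and_true]
  rfl

end PointEvents

section EdgeEvents

variable {n : Fin K → ℕ}

lemma prob_map_eq_self_and_map_eq_of_mem {e e' : Sym2 V} {v : V} (hv : v ∈ e) (hv' : v ∈ e')
    {i j k : Fin K} (hij : i ≠ j) (hik : i ≠ k) :
    prob n (fun f => e.map f = s(i, i) ∧ e'.map f = s(j, k)) = 0 := by
  refine prob_eq_zero fun f ⟨h, h'⟩ => ?_
  have hi : f v ∈ s(i, i) := h ▸ Sym2.mem_map.2 ⟨v, hv, rfl⟩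
  have hjk : f v ∈ s(j, k) := h' ▸ Sym2.mem_map.2 ⟨v, hv', rfl⟩
  rw [Sym2.mem_iff, or_self] at hi
  rcases Sym2.mem_iff.1 hjk with h | h
  exacts [hij (hi.symm.trans h), hik (hi.symm.trans h)]

variable (hn : ∑ c, n c = Fintype.card V)
include hn

lemma prob_map_eq_self {e : Sym2 V} (he : ¬e.IsDiag) (i : Fin K) :
    prob n (fun f => e.map f = s(i, i))
      = n i * (n i - 1) / (Fintype.card V * (Fintype.card V - 1)) := by
  induction e using Sym2.ind with
  | _ a b =>
    rw [← prob_apply_eq_and_apply_eq_self hn (Sym2.mk_isDiag_iff.not.1 he) i]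
    exact prob_congr fun f => by rw [Sym2.map_mk, Sym2.eq_iff, or_self]

lemma prob_map_eq_of_ne {e : Sym2 V} (he : ¬e.IsDiag) {j k : Fin K} (hjk : j ≠ k) :
    prob n (fun f => e.map f = s(j, k))
      = 2 * n j * n k / (Fintype.card V * (Fintype.card V - 1)) := by
  induction e using Sym2.ind with
  | _ a b =>
    have hab := Sym2.mk_isDiag_iff.not.1 he
    rw [prob_congr (Q := fun f => (f a = j ∧ f b = k) ∨ (f a = k ∧ f b = j))
        fun f => by rw [Sym2.map_mk, Sym2.eq_iff],
      prob_or fun f h h' => hjk (h.1.symm.trans h'.1),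
      prob_apply_eq_and_apply_eq_of_ne hn hab hjk, prob_apply_eq_and_apply_eq_of_ne hn hab hjk.symm]
    ring

lemma prob_map_eq_self_and_map_eq_of_disjoint {e e' : Sym2 V} (he : ¬e.IsDiag)
    (he' : ¬e'.IsDiag) (hee' : ∀ v ∈ e, v ∉ e') {i j k : Fin K} (hij : i ≠ j) (hik : i ≠ k)
    (hjk : j ≠ k) :
    prob n (fun f => e.map f = s(i, i) ∧ e'.map f = s(j, k))
      = 2 * (n i * (n i - 1) * (n j * n k)) / (Fintype.card V * (Fintype.card V - 1)
          * (Fintype.card V - 2) * (Fintype.card V - 3)) := by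
  induction e, e' using Sym2.inductionOn₂ with
  | hf a b c d =>
    have habcd : [a, b, c, d].Nodup := by
      have := hee' a (Sym2.mem_mk_left a b)
      have := hee' b (Sym2.mem_mk_right a b)
      simp_all [Sym2.mem_iff]
    rw [prob_congr (Q := fun f => (f a = i ∧ f b = i ∧ f c = j ∧ f d = k)
        ∨ (f a = i ∧ f b = i ∧ f c = k ∧ f d = j))
        fun f => by simp only [Sym2.map_mk, Sym2.eq_iff, or_self, and_or_left, and_assoc],
      prob_or fun f h h' => hjk (h.2.2.1.symm.trans h'.2.2.1),
      prob_apply_eq_and_apply_eq_and_apply_eq_and_apply_eq hn habcd hij hik hjk,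
      prob_apply_eq_and_apply_eq_and_apply_eq_and_apply_eq hn habcd hik hij hjk.symm]
    ring

end EdgeEvents

section Graph

variable (G : SimpleGraph V) [DecidableRel G.Adj]

lemma card_filter_mem_and_mem {e e' : Sym2 V} (he : ¬e.IsDiag) :
    #{v | v ∈ e ∧ v ∈ e'} = (if e = e' then 1 else 0) + if ∃ v ∈ e, v ∈ e' then 1 else 0 := by
  by_cases heq : e = e'
  · subst heq
    rw [if_pos rfl, if_pos ⟨_, Sym2.out_fst_mem e, Sym2.out_fst_mem e⟩, one_add_one_eq_two,
      ← Sym2.card_toFinset_of_not_isDiag e he]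
    congr 1
    ext v
    simp
  by_cases hmeet : ∃ v ∈ e, v ∈ e'
  · obtain ⟨v, hv, hv'⟩ := hmeet
    rw [if_neg heq, if_pos ⟨v, hv, hv'⟩, card_eq_one]
    refine ⟨v, eq_singleton_iff_unique_mem.2 ⟨mem_filter.2 ⟨mem_univ _, hv, hv'⟩, ?_⟩⟩
    intro w hw
    by_contra hwv
    exact heq (Sym2.eq_of_ne_mem hwv (mem_filter.1 hw).2.1 hv (mem_filter.1 hw).2.2 hv')
  · rw [if_neg heq, if_neg hmeet, card_eq_zero, filter_eq_empty_iff]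
    exact fun v _ hv => hmeet ⟨v, hv⟩

lemma sum_degree_sq_eq :
    ∑ v, G.degree v ^ 2
      = #G.edgeFinset + ∑ e ∈ G.edgeFinset, ∑ e' ∈ G.edgeFinset,
          if ∃ v ∈ e, v ∈ e' then 1 else 0 := by
  have hdeg : ∀ v, G.degree v ^ 2 = ∑ e ∈ G.edgeFinset, ∑ e' ∈ G.edgeFinset,
      if v ∈ e ∧ v ∈ e' then 1 else 0 := by
    intro v
    simp only [← G.card_incidenceFinset_eq_degree, G.incidenceFinset_eq_filter, card_filter, sq,
      sum_mul_sum, ite_zero_mul_ite_zero, mul_one]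
  have hinter : ∀ e ∈ G.edgeFinset, ∀ e' ∈ G.edgeFinset, #{v | v ∈ e ∧ v ∈ e'}
      = (if e = e' then 1 else 0) + if ∃ v ∈ e, v ∈ e' then 1 else 0 :=
    fun e he _ _ => card_filter_mem_and_mem (G.not_isDiag_of_mem_edgeSet (G.mem_edgeFinset.1 he))
  calc ∑ v, G.degree v ^ 2
      = ∑ e ∈ G.edgeFinset, ∑ e' ∈ G.edgeFinset, #{v | v ∈ e ∧ v ∈ e'} := by
        simp only [hdeg, card_filter]
        rw [sum_comm]
        exact sum_congr rfl fun e _ => sum_comm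
    _ = _ := by
        rw [sum_congr rfl fun e he => sum_congr rfl (hinter e he)]
        simp only [sum_add_distrib, sum_ite_eq, card_eq_sum_ones]
        congr 1
        exact sum_congr rfl fun e he => if_pos he

lemma sum_ite_disjoint_edges_eq :
    ∑ e ∈ G.edgeFinset, ∑ e' ∈ G.edgeFinset, (if ∃ v ∈ e, v ∈ e' then 0 else 1 : ℝ)
      = #G.edgeFinset ^ 2 - ∑ v, (G.degree v : ℝ) ^ 2 + #G.edgeFinset := by
  have hdeg := congrArg (Nat.cast : ℕ → ℝ) (sum_degree_sq_eq G)
  push_cast at hdeg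
  have hcompl : ∀ (P : Prop) [Decidable P], (if P then 0 else 1 : ℝ) = 1 - if P then 1 else 0 :=
    fun P _ => by split_ifs <;> norm_num
  simp only [hcompl, sum_sub_distrib, sum_const, nsmul_eq_mul, mul_one, hdeg]
  ring

omit [DecidableEq V] in
lemma Rcount_eq_sum (f : V → Fin K) (p q : Fin K) :
    (Rcount G f p q : ℝ) = ∑ e ∈ G.edgeFinset, if e.map f = s(p, q) then 1 else 0 := by
  rw [Rcount, sum_boole]

lemma expect_Rcount (n : Fin K → ℕ) (p q : Fin K) :
    expect n (fun f => (Rcount G f p q : ℝ))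
      = ∑ e ∈ G.edgeFinset, prob n (fun f => e.map f = s(p, q)) := by
  simp only [Rcount_eq_sum, expect_sum, expect_boole]

lemma expect_Rcount_mul_Rcount (n : Fin K → ℕ) (p q p' q' : Fin K) :
    expect n (fun f => (Rcount G f p q : ℝ) * Rcount G f p' q')
      = ∑ e ∈ G.edgeFinset, ∑ e' ∈ G.edgeFinset,
          prob n (fun f => e.map f = s(p, q) ∧ e'.map f = s(p', q')) := by
  simp only [Rcount_eq_sum, sum_mul_sum, ite_zero_mul_ite_zero, mul_one, expect_sum, expect_boole]

end Graph

section Expectations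

variable (G : SimpleGraph V) [DecidableRel G.Adj] {n : Fin K → ℕ}
  (hn : ∑ c, n c = Fintype.card V)
include hn

lemma expect_Rcount_self (i : Fin K) :
    expect n (fun f => (Rcount G f i i : ℝ))
      = #G.edgeFinset * (n i * (n i - 1) / (Fintype.card V * (Fintype.card V - 1))) := by
  rw [expect_Rcount, sum_congr rfl fun e he =>
    prob_map_eq_self hn (G.not_isDiag_of_mem_edgeSet (G.mem_edgeFinset.1 he)) i, sum_const,
    nsmul_eq_mul]

lemma expect_Rcount_of_ne {j k : Fin K} (hjk : j ≠ k) :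
    expect n (fun f => (Rcount G f j k : ℝ))
      = #G.edgeFinset * (2 * n j * n k / (Fintype.card V * (Fintype.card V - 1))) := by
  rw [expect_Rcount, sum_congr rfl fun e he =>
    prob_map_eq_of_ne hn (G.not_isDiag_of_mem_edgeSet (G.mem_edgeFinset.1 he)) hjk, sum_const,
    nsmul_eq_mul]

lemma expect_Rcount_self_mul_Rcount {i j k : Fin K} (hij : i ≠ j) (hik : i ≠ k) (hjk : j ≠ k) :
    expect n (fun f => (Rcount G f i i : ℝ) * Rcount G f j k)
      = (#G.edgeFinset ^ 2 - ∑ v, (G.degree v : ℝ) ^ 2 + #G.edgeFinset)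
        * (2 * (n i * (n i - 1) * (n j * n k)) / (Fintype.card V * (Fintype.card V - 1)
          * (Fintype.card V - 2) * (Fintype.card V - 3))) := by
  have hdiag : ∀ e ∈ G.edgeFinset, ¬e.IsDiag :=
    fun e he => G.not_isDiag_of_mem_edgeSet (G.mem_edgeFinset.1 he)
  rw [expect_Rcount_mul_Rcount, ← sum_ite_disjoint_edges_eq, sum_mul]
  refine sum_congr rfl fun e he => ?_
  rw [sum_mul]
  refine sum_congr rfl fun e' he' => ?_
  split_ifs with hmeet
  · obtain ⟨v, hv, hv'⟩ := hmeet
    rw [prob_map_eq_self_and_map_eq_of_mem hv hv' hij hik, zero_mul]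
  · rw [prob_map_eq_self_and_map_eq_of_disjoint hn (hdiag e he) (hdiag e' he')
      (by simpa using hmeet) hij hik hjk, one_mul]

end Expectations

theorem stmt_12_general (G : SimpleGraph V) [DecidableRel G.Adj]
    (n : Fin K → ℕ) (N : ℕ) (hN : N = Fintype.card V)
    (hsum : ∑ k, n k = N) (i j k : Fin K) (hij : i ≠ j) (hik : i ≠ k) (hjk : j ≠ k)
    (m D : ℝ) (hm : m = (G.edgeFinset.card : ℝ))
    (hD : D = ∑ t : V, (G.degree t : ℝ) ^ 2) :
    covar n (fun f : V → Fin K => (Rcount G f i i : ℝ))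
        (fun f : V → Fin K => (Rcount G f j k : ℝ))
      = (m ^ 2 - D + m) * (2 * (n i : ℝ) * (n j : ℝ) * (n k : ℝ) * ((n i : ℝ) - 1)
            / ((N : ℝ) * ((N : ℝ) - 1) * ((N : ℝ) - 2) * ((N : ℝ) - 3)))
        - (m * (n i : ℝ) * ((n i : ℝ) - 1) / ((N : ℝ) * ((N : ℝ) - 1)))
          * (2 * m * (n j : ℝ) * (n k : ℝ) / ((N : ℝ) * ((N : ℝ) - 1))) := by
  subst hN hm hD
  rw [covar_eq_expect_mul_sub, expect_Rcount_self_mul_Rcount G hsum hij hik hjk,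
    expect_Rcount_self G hsum, expect_Rcount_of_ne G hsum hjk]
  ring

theorem stmt_12 (G : SimpleGraph V) [DecidableRel G.Adj]
    (n : Fin K → ℕ) (N : ℕ) (hN : N = Fintype.card V) (hN4 : 4 ≤ N)
    (hsum : ∑ k, n k = N) (i j k : Fin K) (hij : i ≠ j) (hik : i ≠ k) (hjk : j ≠ k)
    (m D : ℝ) (hm : m = (G.edgeFinset.card : ℝ))
    (hD : D = ∑ t : V, (G.degree t : ℝ) ^ 2) :
    covar n (fun f : V → Fin K => (Rcount G f i i : ℝ))
        (fun f : V → Fin K => (Rcount G f j k : ℝ))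
      = (m ^ 2 - D + m) * (2 * (n i : ℝ) * (n j : ℝ) * (n k : ℝ) * ((n i : ℝ) - 1)
            / ((N : ℝ) * ((N : ℝ) - 1) * ((N : ℝ) - 2) * ((N : ℝ) - 3)))
        - (m * (n i : ℝ) * ((n i : ℝ) - 1) / ((N : ℝ) * ((N : ℝ) - 1)))
          * (2 * m * (n j : ℝ) * (n k : ℝ) / ((N : ℝ) * ((N : ℝ) - 1))) :=
  stmt_12_general G n N hN hsum i j k hij hik hjk m D hm hD
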